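/- arXiv:2104.00665 — 3 statements merged into one kernel-verified Lean document; each statement's English description precedes it below -/
import Mathlib

section
/- For a lazy reversible chain Q = (P+I)/2 on a finite state space, for every state x and every M > 0, the sum over all k ≥ 0 of (Q^k(x,x) − π(x)) is at most e^{M/2}/(e^{M/2}−1) times the sum over 0 ≤ k ≤ ⌈M·t_rel⌉ of (Q^k(x,x) − π(x)). -/
open scoped BigOperators

/-- The relaxation time `t_rel = 1/γ`, where `γ = 1 - max{λ : λ eigenvalue of P, λ ≠ 1}`. -/
noncomputable def relaxTime {V : Type*} [Fintype V] (P : V → V → ℝ) : ℝ :=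
  (1 - sSup {l : ℝ | l ≠ 1 ∧ ∃ f : V → ℝ, f ≠ 0 ∧ (Matrix.of P).mulVec f = l • f})⁻¹

/-!
The similarity `T = D^{1/2} Q D^{-1/2}`, `D = diag π`, turns the `π`-reversible lazy chain `Q` into a
symmetric matrix, so `Q^k(x,x) = ∑ᵢ μᵢ^k uᵢ(x)²` for an orthonormal eigenbasis `uᵢ` of `T`.
Irreducibility makes the eigenvalue `1` simple with eigenvector `√π`, whose term is exactly `π(x)`,
and laziness puts all other eigenvalues in `[0, 1 - 1/(2 t_rel)]`. Hence `a_k = Q^k(x,x) - π(x)` is a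
nonnegative combination of such powers, and `a_{k+m} ≤ e^{-m/(2 t_rel)} a_k`. For
`m = ⌈M t_rel⌉ + 1` this gives `a_{k+m} ≤ e^{-M/2} a_k`, and then
`∑_{k<N+m} a_k ≤ ∑_{k<m} a_k + e^{-M/2} ∑_{k<N} a_k` bounds every partial sum by
`(1 - e^{-M/2})⁻¹ ∑_{k<m} a_k`.
-/

open Finset Matrix

theorem Real.tsum_le_of_add_le_mul {a : ℕ → ℝ} {m : ℕ} {q : ℝ} (ha : ∀ k, 0 ≤ a k)
    (hq : q < 1) (h : ∀ k, a (k + m) ≤ q * a k) :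
    ∑' k, a k ≤ (1 - q)⁻¹ * ∑ k ∈ range m, a k := by
  refine Real.tsum_le_of_sum_range_le ha fun N => ?_
  have hmono : ∑ k ∈ range N, a k ≤ ∑ k ∈ range (m + N), a k :=
    sum_le_sum_of_subset_of_nonneg (range_subset_range.mpr (by omega)) fun k _ _ => ha k
  have hshift : ∑ k ∈ range (m + N), a k ≤ ∑ k ∈ range m, a k + q * ∑ k ∈ range N, a k := by
    rw [sum_range_add, mul_sum]
    gcongr with k
    simpa only [add_comm] using h k
  rw [le_inv_mul_iff₀ (by linarith)]
  nlinarith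

theorem Finset.sum_mul_pow_add_le {ι : Type*} (s : Finset ι) {w μ : ι → ℝ} {ρ : ℝ}
    (h : ∀ i ∈ s, 0 ≤ w i ∧ 0 ≤ μ i ∧ μ i ≤ ρ) (t u : ℕ) :
    ∑ i ∈ s, w i * μ i ^ (t + u) ≤ ρ ^ u * ∑ i ∈ s, w i * μ i ^ t := by
  rw [mul_sum]
  refine sum_le_sum fun i hi => ?_
  obtain ⟨hw, hμ0, hμρ⟩ := h i hi
  calc w i * μ i ^ (t + u) = μ i ^ u * (w i * μ i ^ t) := by ring
    _ ≤ ρ ^ u * (w i * μ i ^ t) := by gcongr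

namespace Matrix

variable {n : Type*} [Fintype n] [DecidableEq n]

theorem mem_spectrum_of_mulVec_eq_smul {K : Type*} [Field K] {A : Matrix n n K} {f : n → K}
    {l : K} (hf : f ≠ 0) (h : A *ᵥ f = l • f) : l ∈ spectrum K A := by
  rw [← spectrum_toLin']
  exact (Module.End.hasEigenvalue_of_hasEigenvector
    ⟨Module.End.mem_eigenspace_iff.mpr (by simpa using h), hf⟩).mem_spectrum

theorem finite_setOf_mulVec_eq_smul {K : Type*} [Field K] (A : Matrix n n K) :
    {l : K | ∃ f, f ≠ 0 ∧ A *ᵥ f = l • f}.Finite :=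
  A.finite_spectrum.subset fun _ ⟨_, hf, h⟩ => mem_spectrum_of_mulVec_eq_smul hf h

namespace IsHermitian

variable {T : Matrix n n ℝ} (hT : T.IsHermitian)

theorem pow_apply (k : ℕ) (x y : n) : (T ^ k) x y =
    ∑ i, hT.eigenvalues i ^ k * (hT.eigenvectorBasis i x * hT.eigenvectorBasis i y) := by
  rw [← cfc_pow_id (R := ℝ) T k hT.isSelfAdjoint, hT.cfc_eq, IsHermitian.cfc,
    Unitary.conjStarAlgAut_apply, mul_apply]
  simp only [mul_diagonal, star_eq_conjTranspose, conjTranspose_apply,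
    eigenvectorUnitary_apply, Function.comp_apply, RCLike.ofReal_real_eq_id, id, star_trivial]
  exact sum_congr rfl fun i _ => by ring

theorem sum_eigenvectorBasis_mul (i j : n) :
    ∑ x, hT.eigenvectorBasis i x * hT.eigenvectorBasis j x = if i = j then 1 else 0 := by
  rw [← orthonormal_iff_ite.mp hT.eigenvectorBasis.orthonormal i j]
  simp [PiLp.inner_apply, mul_comm]

section SimpleEigenvalueOne

variable {v : n → ℝ} (hv : T *ᵥ v = v) (hv1 : ∑ x, v x ^ 2 = 1)
  (hsimple : ∀ g, T *ᵥ g = g → ∃ c : ℝ, g = c • v)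

include hv1 hsimple in
theorem eigenvectorBasis_eq_smul_of_eigenvalues_eq_one {i : n} (hi : hT.eigenvalues i = 1) :
    ∃ c : ℝ, c ^ 2 = 1 ∧ ⇑(hT.eigenvectorBasis i) = c • v := by
  obtain ⟨c, hc⟩ := hsimple _ (by rw [hT.mulVec_eigenvectorBasis, hi, one_smul])
  refine ⟨c, ?_, hc⟩
  have hnorm := hT.sum_eigenvectorBasis_mul i i
  rw [if_pos rfl, hc] at hnorm
  simp only [Pi.smul_apply, smul_eq_mul] at hnorm
  rw [← hnorm, ← mul_one (c ^ 2), ← hv1, mul_sum]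
  exact sum_congr rfl fun x _ => by ring

include hv hv1 hsimple in
theorem sum_filter_eigenvalues_eq_one (x y : n) :
    ∑ i ∈ univ.filter (hT.eigenvalues · = 1),
      hT.eigenvectorBasis i x * hT.eigenvectorBasis i y = v x * v y := by
  have hv0 : v ≠ 0 := fun h => by simp [h] at hv1
  obtain ⟨i₀, hi₀⟩ : ∃ i, hT.eigenvalues i = 1 := by
    rw [← Set.mem_range, ← hT.spectrum_real_eq_range_eigenvalues]
    exact mem_spectrum_of_mulVec_eq_smul hv0 (by rw [one_smul, hv])
  -- two orthonormal vectors cannot both be multiples of `v`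
  have hunique : univ.filter (hT.eigenvalues · = 1) = {i₀} := by
    refine eq_singleton_iff_unique_mem.mpr ⟨by simpa using hi₀, fun j hj => ?_⟩
    by_contra hne
    obtain ⟨c, hc2, hc⟩ := hT.eigenvectorBasis_eq_smul_of_eigenvalues_eq_one hv1 hsimple
      (mem_filter.mp hj).2
    obtain ⟨d, hd2, hd⟩ := hT.eigenvectorBasis_eq_smul_of_eigenvalues_eq_one hv1 hsimple hi₀
    have horth := hT.sum_eigenvectorBasis_mul j i₀
    simp only [hc, hd, if_neg hne, Pi.smul_apply, smul_eq_mul] at horth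
    have hcd : c * d = 0 := by
      rw [← horth, ← mul_one (c * d), ← hv1, mul_sum]
      exact sum_congr rfl fun x _ => by ring
    nlinarith
  obtain ⟨c, hc2, hc⟩ := hT.eigenvectorBasis_eq_smul_of_eigenvalues_eq_one hv1 hsimple hi₀
  rw [hunique, sum_singleton, hc]
  simp only [Pi.smul_apply, smul_eq_mul]
  linear_combination (v x * v y) * hc2

include hv hv1 hsimple in
theorem pow_apply_self_sub_sq (k : ℕ) (x : n) :
    (T ^ k) x x - v x ^ 2 = ∑ i ∈ univ.filter (hT.eigenvalues · ≠ 1),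
      hT.eigenvectorBasis i x ^ 2 * hT.eigenvalues i ^ k := by
  rw [hT.pow_apply, ← sum_filter_add_sum_filter_not univ (hT.eigenvalues · = 1), sq,
    ← hT.sum_filter_eigenvalues_eq_one hv hv1 hsimple x x, sum_congr rfl fun i hi => by
      rw [(mem_filter.mp hi).2, one_pow, one_mul]]
  simp only [add_sub_cancel_left, sq]
  exact sum_congr rfl fun i _ => mul_comm _ _

end SimpleEigenvalueOne

end IsHermitian

section RowStochastic

variable {A : Matrix n n ℝ} (hA : A ∈ rowStochastic ℝ n)
include hA

theorem abs_le_one_of_mulVec_eq_smul {f : n → ℝ} {l : ℝ} (hf : f ≠ 0) (h : A *ᵥ f = l • f) :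
    |l| ≤ 1 := by
  obtain ⟨y, hy⟩ := Function.ne_iff.mp hf
  obtain ⟨x, -, hx⟩ := exists_max_image univ (fun z => |f z|) ⟨y, mem_univ y⟩
  have hpos : 0 < |f x| := (abs_pos.mpr hy).trans_le (hx y (mem_univ y))
  have key : |l| * |f x| ≤ 1 * |f x| :=
    calc |l| * |f x| = |∑ z, A x z * f z| := by
          rw [← abs_mul, ← smul_eq_mul, ← Pi.smul_apply, ← h]; rfl
      _ ≤ ∑ z, A x z * |f z| := by
          refine (abs_sum_le_sum_abs _ _).trans_eq (sum_congr rfl fun z _ => ?_)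
          rw [abs_mul, abs_of_nonneg (nonneg_of_mem_rowStochastic hA)]
      _ ≤ ∑ z, A x z * |f x| :=
          sum_le_sum fun z _ => mul_le_mul_of_nonneg_left (hx z (mem_univ z))
            (nonneg_of_mem_rowStochastic hA)
      _ = 1 * |f x| := by rw [← sum_mul, sum_row_of_mem_rowStochastic hA]
  exact le_of_mul_le_mul_right key hpos

theorem eq_of_mulVec_eq_self (hirr : ∀ i j, ∃ k : ℕ, 0 < (A ^ k) i j) {f : n → ℝ}
    (hf : A *ᵥ f = f) (i j : n) : f i = f j := by
  obtain ⟨x, -, hx⟩ := exists_max_image univ f ⟨i, mem_univ i⟩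
  suffices h : ∀ y, f y = f x by rw [h i, h j]
  have hfk (k : ℕ) : (A ^ k) *ᵥ f = f := by
    induction k with
    | zero => exact one_mulVec f
    | succ k ih => rw [pow_succ, ← mulVec_mulVec, hf, ih]
  intro y
  obtain ⟨k, hk⟩ := hirr x y
  have hAk : A ^ k ∈ rowStochastic ℝ n := pow_mem hA k
  -- `f x` is a weighted average of the values `f z ≤ f x`, with positive weight on `f y`
  have hzero : ∑ z, (A ^ k) x z * (f x - f z) = 0 := by
    simp only [mul_sub, sum_sub_distrib, ← sum_mul, sum_row_of_mem_rowStochastic hAk]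
    rw [← congrFun (hfk k) x]
    simp [mulVec, dotProduct]
  have hy := (sum_eq_zero_iff_of_nonneg fun z _ => mul_nonneg
    (nonneg_of_mem_rowStochastic hAk) (sub_nonneg.mpr (hx z (mem_univ z)))).mp hzero y (mem_univ y)
  linarith [(mul_eq_zero.mp hy).resolve_left hk.ne']

theorem half_smul_add_one_mem_rowStochastic : (2 : ℝ)⁻¹ • (A + 1) ∈ rowStochastic ℝ n := by
  rw [smul_add]
  exact convex_rowStochastic hA (one_mem _) (by norm_num) (by norm_num) (by norm_num)

end RowStochastic

theorem half_smul_add_one_mulVec_eq_smul_iff (A : Matrix n n ℝ) (f : n → ℝ) (ν : ℝ) :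
    ((2 : ℝ)⁻¹ • (A + 1)) *ᵥ f = ν • f ↔ A *ᵥ f = (2 * ν - 1) • f := by
  simp only [smul_mulVec, add_mulVec, one_mulVec, funext_iff, Pi.smul_apply, Pi.add_apply,
    smul_eq_mul]
  refine forall_congr' fun x => ?_
  constructor <;> intro h <;> linarith

omit [Fintype n] in
theorem half_smul_add_one_reversible {A : Matrix n n ℝ} {π : n → ℝ}
    (hrev : ∀ x y, π x * A x y = π y * A y x) (x y : n) :
    π x * ((2 : ℝ)⁻¹ • (A + 1)) x y = π y * ((2 : ℝ)⁻¹ • (A + 1)) y x := by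
  rcases eq_or_ne x y with rfl | hxy
  · rfl
  · simp only [smul_apply, add_apply, one_apply_ne hxy, one_apply_ne hxy.symm, smul_eq_mul,
      add_zero]
    linear_combination (2 : ℝ)⁻¹ * hrev x y

noncomputable def symmetrize (A : Matrix n n ℝ) (π : n → ℝ) : Matrix n n ℝ :=
  diagonal (fun x => √(π x)) * A * diagonal (fun x => (√(π x))⁻¹)

section Symmetrize

variable {A : Matrix n n ℝ} {π : n → ℝ}

theorem symmetrize_apply (x y : n) :
    symmetrize A π x y = √(π x) * A x y * (√(π y))⁻¹ := by
  rw [symmetrize, mul_diagonal, diagonal_mul]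

variable (hπ : ∀ x, 0 < π x)
include hπ

theorem symmetrize_apply_self (x : n) : symmetrize A π x x = A x x := by
  rw [symmetrize_apply, mul_comm, ← mul_assoc, inv_mul_cancel₀ (Real.sqrt_pos.mpr (hπ x)).ne',
    one_mul]

theorem isHermitian_symmetrize (hrev : ∀ x y, π x * A x y = π y * A y x) :
    (symmetrize A π).IsHermitian := by
  ext x y
  have hx := Real.sqrt_pos.mpr (hπ x)
  have hy := Real.sqrt_pos.mpr (hπ y)
  have hrev' := hrev y x
  rw [← Real.mul_self_sqrt (hπ x).le, ← Real.mul_self_sqrt (hπ y).le] at hrev'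
  simp only [conjTranspose_apply, star_trivial, symmetrize_apply]
  field_simp
  linear_combination hrev'

theorem symmetrize_pow (k : ℕ) : symmetrize A π ^ k = symmetrize (A ^ k) π := by
  have hcancel : diagonal (fun x => (√(π x))⁻¹) * diagonal (fun x => √(π x)) = 1 := by
    rw [diagonal_mul_diagonal, ← diagonal_one]
    exact congrArg diagonal (funext fun x => inv_mul_cancel₀ (Real.sqrt_pos.mpr (hπ x)).ne')
  induction k with
  | zero =>
    rw [pow_zero, pow_zero, symmetrize, mul_one, diagonal_mul_diagonal, ← diagonal_one]
    exact congrArg diagonal (funext fun x => (mul_inv_cancel₀ (Real.sqrt_pos.mpr (hπ x)).ne').symm)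
  | succ k ih =>
    rw [pow_succ, ih, pow_succ, symmetrize, symmetrize, symmetrize]
    simp only [← mul_assoc]
    rw [mul_assoc _ (diagonal _) (diagonal _), hcancel, mul_one]

theorem symmetrize_mulVec_sqrt_mul (f : n → ℝ) :
    symmetrize A π *ᵥ (fun x => √(π x) * f x) = fun x => √(π x) * (A *ᵥ f) x := by
  ext x
  simp only [mulVec, dotProduct, symmetrize_apply, mul_sum]
  refine sum_congr rfl fun y _ => ?_
  rw [mul_assoc, mul_assoc, inv_mul_cancel_left₀ (Real.sqrt_pos.mpr (hπ y)).ne']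

theorem mulVec_div_sqrt_eq_smul_of_symmetrize {g : n → ℝ} {μ : ℝ}
    (h : symmetrize A π *ᵥ g = μ • g) :
    A *ᵥ (fun x => g x / √(π x)) = μ • fun x => g x / √(π x) := by
  have hsqrt x : √(π x) ≠ 0 := (Real.sqrt_pos.mpr (hπ x)).ne'
  have hg := symmetrize_mulVec_sqrt_mul (A := A) hπ (fun x => g x / √(π x))
  simp only [mul_div_cancel₀ _ (hsqrt _), h] at hg
  ext x
  have := congrFun hg x
  simp only [Pi.smul_apply, smul_eq_mul] at this ⊢
  rw [mul_div_assoc', eq_div_iff (hsqrt x), this, mul_comm]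

theorem pow_apply_self_sub_eq_sum (hA : A *ᵥ 1 = 1)
    (hharm : ∀ f, A *ᵥ f = f → ∀ x y, f x = f y) (hπ1 : ∑ x, π x = 1)
    (hrev : ∀ x y, π x * A x y = π y * A y x) (x : n) :
    ∃ (s : Finset n) (w μ : n → ℝ), (∀ i ∈ s, 0 ≤ w i ∧ μ i ≠ 1 ∧ ∃ f, f ≠ 0 ∧ A *ᵥ f = μ i • f) ∧
      ∀ k, (A ^ k) x x - π x = ∑ i ∈ s, w i * μ i ^ k := by
  have hT := isHermitian_symmetrize hπ hrev
  have hsqrt y : √(π y) ≠ 0 := (Real.sqrt_pos.mpr (hπ y)).ne'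
  have hv : symmetrize A π *ᵥ (fun y => √(π y)) = fun y => √(π y) := by
    simpa [hA] using symmetrize_mulVec_sqrt_mul (A := A) hπ 1
  have hv1 : ∑ y, √(π y) ^ 2 = 1 := by simp_rw [Real.sq_sqrt (hπ _).le, hπ1]
  have hsimple (g : n → ℝ) (hg : symmetrize A π *ᵥ g = g) : ∃ c : ℝ, g = c • fun y => √(π y) := by
    have hg' := mulVec_div_sqrt_eq_smul_of_symmetrize hπ (μ := 1) (by rwa [one_smul])
    rw [one_smul] at hg'
    have hharm' := hharm _ hg'
    refine ⟨g x / √(π x), funext fun y => ?_⟩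
    rw [Pi.smul_apply, smul_eq_mul, hharm' x y, div_mul_cancel₀ _ (hsqrt y)]
  refine ⟨univ.filter (hT.eigenvalues · ≠ 1), fun i => hT.eigenvectorBasis i x ^ 2,
    hT.eigenvalues, fun i hi => ⟨sq_nonneg _, (mem_filter.mp hi).2, _, ?_,
      mulVec_div_sqrt_eq_smul_of_symmetrize hπ (hT.mulVec_eigenvectorBasis i)⟩, fun k => ?_⟩
  · intro h0
    refine hT.eigenvectorBasis.orthonormal.ne_zero i (PiLp.ext fun y => ?_)
    simpa [hsqrt y] using congrFun h0 y
  · rw [← symmetrize_apply_self (A := A ^ k) hπ, ← symmetrize_pow hπ, ← Real.sq_sqrt (hπ x).le]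
    exact hT.pow_apply_self_sub_sq hv hv1 hsimple k x

end Symmetrize

end Matrix

section RelaxTime

variable {V : Type*} [Fintype V] [DecidableEq V] {P : V → V → ℝ}

theorem le_one_sub_inv_relaxTime {f : V → ℝ} {l : ℝ} (hl : l ≠ 1) (hf : f ≠ 0)
    (h : Matrix.of P *ᵥ f = l • f) : l ≤ 1 - (relaxTime P)⁻¹ := by
  rw [relaxTime, inv_inv, sub_sub_cancel]
  exact le_csSup ((finite_setOf_mulVec_eq_smul _).subset fun _ hl => hl.2).bddAbove ⟨hl, f, hf, h⟩

theorem relaxTime_pos (hP : Matrix.of P ∈ rowStochastic ℝ V) : 0 < relaxTime P := by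
  refine inv_pos.mpr (sub_pos.mpr ?_)
  set E := {l : ℝ | l ≠ 1 ∧ ∃ f : V → ℝ, f ≠ 0 ∧ (Matrix.of P).mulVec f = l • f}
  rcases E.eq_empty_or_nonempty with hE | hE
  · rw [hE, Real.sSup_empty]
    exact one_pos
  rw [((finite_setOf_mulVec_eq_smul _).subset fun _ hl => hl.2).csSup_lt_iff hE]
  rintro l ⟨hl, f, hf, h⟩
  exact lt_of_le_of_ne (abs_le.mp (abs_le_one_of_mulVec_eq_smul hP hf h)).2 hl

end RelaxTime

theorem lazy_return_excess_decay {V : Type*} [Fintype V] [DecidableEq V] {P : V → V → ℝ}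
    {π : V → ℝ} (hP : Matrix.of P ∈ rowStochastic ℝ V)
    (hirr : ∀ x y, ∃ k : ℕ, 0 < (Matrix.of P ^ k) x y) (hπ0 : ∀ x, 0 < π x)
    (hπ1 : ∑ x, π x = 1) (hrev : ∀ x y, π x * P x y = π y * P y x) (x : V) (t u : ℕ) :
    0 ≤ (((2 : ℝ)⁻¹ • (Matrix.of P + 1)) ^ t) x x - π x ∧
      (((2 : ℝ)⁻¹ • (Matrix.of P + 1)) ^ (t + u)) x x - π x ≤
        Real.exp (-(u / (2 * relaxTime P))) * ((((2 : ℝ)⁻¹ • (Matrix.of P + 1)) ^ t) x x - π x) := by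
  have hQ := half_smul_add_one_mem_rowStochastic hP
  have hharm (f : V → ℝ) (hf : ((2 : ℝ)⁻¹ • (Matrix.of P + 1)) *ᵥ f = f) (x y : V) :
      f x = f y := by
    have hPf := (half_smul_add_one_mulVec_eq_smul_iff _ f 1).mp (by rwa [one_smul])
    norm_num at hPf
    exact eq_of_mulVec_eq_self hP hirr hPf x y
  obtain ⟨s, w, μ, hs, hrep⟩ := pow_apply_self_sub_eq_sum hπ0 hQ.2 hharm hπ1
    (half_smul_add_one_reversible hrev) x
  -- `2 μ i - 1` is an eigenvalue `≠ 1` of `P`, so it lies in `[-1, 1 - 1 / t_rel]`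
  have hμ : ∀ i ∈ s, 0 ≤ w i ∧ 0 ≤ μ i ∧ μ i ≤ Real.exp (-((relaxTime P)⁻¹ / 2)) := by
    intro i hi
    obtain ⟨hw, hμ1, f, hf, h⟩ := hs i hi
    rw [half_smul_add_one_mulVec_eq_smul_iff] at h
    have habs := abs_le.mp (abs_le_one_of_mulVec_eq_smul hP hf h)
    have hgap := le_one_sub_inv_relaxTime (by contrapose! hμ1; linarith) hf h
    have hexp := Real.add_one_le_exp (-((relaxTime P)⁻¹ / 2))
    exact ⟨hw, by linarith, by linarith⟩
  rw [hrep, hrep]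
  refine ⟨sum_nonneg fun i hi => mul_nonneg (hμ i hi).1 (pow_nonneg (hμ i hi).2.1 t), ?_⟩
  convert sum_mul_pow_add_le s hμ t u using 2
  rw [← Real.exp_nat_mul]
  congr 1
  ring

/-- For the lazy chain `Q = (P+I)/2` of a finite irreducible reversible
chain `P`, for every state `x` and every `M > 0`,
`∑_{k ≥ 0} (Q^k(x,x) − π(x)) ≤ e^{M/2}/(e^{M/2}−1) · ∑_{k=0}^{⌈M t_rel⌉} (Q^k(x,x) − π(x))`. -/
theorem lazy_return_sum_bound {V : Type*} [Fintype V] [DecidableEq V]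
    (P : V → V → ℝ) (π : V → ℝ)
    (hnn : ∀ x y, 0 ≤ P x y) (hrow : ∀ x, ∑ y, P x y = 1)
    (hirr : ∀ x y, ∃ n : ℕ, 0 < (Matrix.of P ^ n) x y)
    (hπ0 : ∀ x, 0 < π x) (hπ1 : ∑ x, π x = 1)
    (hrev : ∀ x y, π x * P x y = π y * P y x) :
    ∀ (x : V) (M : ℝ), 0 < M →
      (∑' k : ℕ, ((((2:ℝ)⁻¹ • (Matrix.of P + 1)) ^ k) x x - π x))
        ≤ Real.exp (M / 2) / (Real.exp (M / 2) - 1) *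
          ∑ k ∈ Finset.range (⌈M * relaxTime P⌉₊ + 1),
            ((((2:ℝ)⁻¹ • (Matrix.of P + 1)) ^ k) x x - π x) := by
  intro x M hM
  have hP : Matrix.of P ∈ rowStochastic ℝ V := mem_rowStochastic_iff_sum.mpr ⟨hnn, hrow⟩
  have hdecay := lazy_return_excess_decay hP hirr hπ0 hπ1 hrev x
  have ht := relaxTime_pos hP
  set m := ⌈M * relaxTime P⌉₊ + 1
  have hq : Real.exp (-(m / (2 * relaxTime P))) ≤ Real.exp (-(M / 2)) := by
    have hm : M * relaxTime P ≤ m := (Nat.le_ceil _).trans (by simp [m])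
    rw [Real.exp_le_exp, neg_le_neg_iff, le_div_iff₀ (by positivity)]
    linarith
  have hconst : Real.exp (M / 2) / (Real.exp (M / 2) - 1) = (1 - Real.exp (-(M / 2)))⁻¹ := by
    have he : 1 < Real.exp (M / 2) := Real.one_lt_exp_iff.mpr (by linarith)
    rw [Real.exp_neg]
    field_simp
  rw [hconst]
  exact Real.tsum_le_of_add_le_mul (fun k => (hdecay k 0).1)
    (Real.exp_lt_one_iff.mpr (by linarith))
    fun k => (hdecay k m).2.trans (mul_le_mul_of_nonneg_right hq (hdecay k 0).1)
end

section
/- Let a ≠ b be states of a finite irreducible chain and Γ_λ an independent geometric random variable of parameter λ. If P_a(τ_b < Γ_λ) ≥ 1/2, then E_a[N(a, τ_b)] ≤ 2·E_a[N(a, Γ_λ ∧ τ_b)]. -/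
/-!
Write `f t = P_a(X_t = a, t < τ_b)` and `q = 1 - λ`, so that the two expectations are `∑ f t`
and `∑ qᵗ f t`. Since `1 - qᵗ = ∑_{m<t} (1 - q) qᵐ`, their difference is
`∑ₘ (1 - q) qᵐ ∑_{t>m} f t`. By the Markov property at time `m`, the visits to `a` after `m` are at
most `P_a(τ_b > m)` times the visits from the worst starting point, and the first-passage
decomposition at `τ_a` shows that the worst starting point is `a` itself. Summing against the
geometric weights gives `P_a(τ_b > Γ') ≤ 1 - P_a(τ_b < Γ_λ)` with `Γ'` geometric on `{0, 1, …}`,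
hence `P_a(τ_b < Γ_λ) ∑ f t ≤ ∑ qᵗ f t`.
-/

open scoped BigOperators

/- `pathSum P x t A`: probability, for the chain with transition matrix `P` started
at `x`, of the event `A` about the first `t+1` positions of the trajectory. -/
open Classical in
noncomputable def pathSum {V : Type*} [Fintype V] (P : V → V → ℝ) (x : V) (t : ℕ)
    (A : (Fin (t+1) → V) → Prop) : ℝ :=
  ∑ w : Fin (t+1) → V,
    if w 0 = x ∧ A w then ∏ i : Fin t, P (w i.castSucc) (w i.succ) else 0

/-- `E_a[N(a,τ_b)]`: expected number of visits to `a` up to time `τ_b`, started at `a`. -/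
noncomputable def visitsBeforeExp {V : Type*} [Fintype V] (P : V → V → ℝ) (a b : V) : ℝ :=
  ∑' t : ℕ, pathSum P a t (fun w => w (Fin.last t) = a ∧ ∀ i, w i ≠ b)

/-- `E_a[N(a, Γ_λ ∧ τ_b)]`, where `Γ_λ` is an independent geometric random variable
with `P(Γ_λ ≥ t) = (1-λ)^t`. -/
noncomputable def visitsBeforeGeomExp {V : Type*} [Fintype V] (P : V → V → ℝ)
    (a b : V) (lam : ℝ) : ℝ :=
  ∑' t : ℕ, (1 - lam) ^ t *
    pathSum P a t (fun w => w (Fin.last t) = a ∧ ∀ i, w i ≠ b)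

/-- `P_a(τ_b < Γ_λ)`, where `Γ_λ` is an independent geometric random variable
with `P(Γ_λ > t) = (1-λ)^(t+1)`. -/
noncomputable def hitBeforeGeomProb {V : Type*} [Fintype V] (P : V → V → ℝ)
    (a b : V) (lam : ℝ) : ℝ :=
  ∑' t : ℕ, (1 - lam) ^ (t + 1) *
    pathSum P a t (fun w => w (Fin.last t) = b ∧ ∀ i, i ≠ Fin.last t → w i ≠ b)

open Finset

section PathSum

variable {V : Type*} [Fintype V] (P : V → V → ℝ)

theorem pathSum_nonneg (hnn : ∀ x y, 0 ≤ P x y) (x : V) (t : ℕ) (A : (Fin (t+1) → V) → Prop) :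
    0 ≤ pathSum P x t A :=
  sum_nonneg fun _ _ => by
    split_ifs
    exacts [prod_nonneg fun _ _ => hnn _ _, le_rfl]

theorem pathSum_zero (x : V) (A : (Fin 1 → V) → Prop) [Decidable (A fun _ => x)] :
    pathSum P x 0 A = if A (fun _ => x) then 1 else 0 := by
  classical
  rw [pathSum, ← (Equiv.funUnique (Fin 1) V).symm.sum_comp]
  simp only [Equiv.funUnique, Fin.isValue, Equiv.piUnique_symm_apply, uniqueElim_const,
    univ_eq_empty, prod_const, card_empty, pow_zero, ite_and, sum_ite_eq', mem_univ, ↓reduceIte]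
  exact if_congr Iff.rfl rfl rfl

theorem pathSum_succ (x : V) (t : ℕ) (C : (Fin (t+2) → V) → Prop) :
    pathSum P x (t+1) C = ∑ y, P x y * pathSum P y t (fun w => C (Fin.cons x w)) := by
  classical
  simp only [pathSum]
  rw [← (Fin.consEquiv fun _ => V).sum_comp, Fintype.sum_prod_type]
  simp only [Fin.consEquiv, Equiv.coe_fn_mk, Fin.cons_zero, Fin.cons_succ, Fin.prod_univ_succ,
    Fin.castSucc_zero, Fin.castSucc_succ, ite_and, sum_ite_irrel, sum_const_zero, sum_ite_eq',
    mem_univ, ↓reduceIte, mul_sum, mul_ite, mul_zero]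
  rw [sum_comm]
  simp

theorem pathSum_succ_of_iff {x : V} {t : ℕ} {C : (Fin (t+2) → V) → Prop} {p : Prop} [Decidable p]
    {D : (Fin (t+1) → V) → Prop} (h : ∀ w, C (Fin.cons x w) ↔ p ∧ D w) :
    pathSum P x (t+1) C = if p then ∑ y, P x y * pathSum P y t D else 0 := by
  simp only [pathSum_succ, h]
  split_ifs with hp
  · simp only [hp, true_and]
  · simp [hp, pathSum]

end PathSum

section Taboo

variable {V : Type*} [Fintype V] (P : V → V → ℝ)

/-- Chung's taboo probability `P_x(X_t = y, τ_b > t)`. -/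
noncomputable def tabooProb (b : V) (t : ℕ) (x y : V) : ℝ :=
  pathSum P x t (fun w => w (Fin.last t) = y ∧ ∀ i, w i ≠ b)

noncomputable def firstHitProb (b : V) (t : ℕ) (x : V) : ℝ :=
  pathSum P x t (fun w => w (Fin.last t) = b ∧ ∀ i, i ≠ Fin.last t → w i ≠ b)

noncomputable def firstHitBeforeProb (a b : V) (t : ℕ) (x : V) : ℝ :=
  pathSum P x t (fun w => w (Fin.last t) = a ∧ ∀ i, w i ≠ b ∧ (i ≠ Fin.last t → w i ≠ a))

theorem tabooProb_nonneg (hnn : ∀ x y, 0 ≤ P x y) (b : V) (t : ℕ) (x y : V) :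
    0 ≤ tabooProb P b t x y :=
  pathSum_nonneg P hnn x t _

theorem firstHitProb_nonneg (hnn : ∀ x y, 0 ≤ P x y) (b : V) (t : ℕ) (x : V) :
    0 ≤ firstHitProb P b t x :=
  pathSum_nonneg P hnn x t _

theorem firstHitBeforeProb_nonneg (hnn : ∀ x y, 0 ≤ P x y) (a b : V) (t : ℕ) (x : V) :
    0 ≤ firstHitBeforeProb P a b t x :=
  pathSum_nonneg P hnn x t _

variable [DecidableEq V]

theorem tabooProb_zero (b x y : V) : tabooProb P b 0 x y = if x = y ∧ x ≠ b then 1 else 0 := by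
  simp [tabooProb, pathSum_zero]

theorem tabooProb_succ (b : V) (t : ℕ) (x y : V) :
    tabooProb P b (t+1) x y = if x ≠ b then ∑ z, P x z * tabooProb P b t z y else 0 :=
  pathSum_succ_of_iff P fun w => by
    rw [Fin.forall_fin_succ]
    simp only [← Fin.succ_last, Fin.cons_succ, Fin.cons_zero, ne_eq]
    tauto

theorem firstHitProb_zero (b x : V) : firstHitProb P b 0 x = if x = b then 1 else 0 := by
  simp [firstHitProb, pathSum_zero]

theorem firstHitProb_succ (b : V) (t : ℕ) (x : V) :
    firstHitProb P b (t+1) x = if x ≠ b then ∑ z, P x z * firstHitProb P b t z else 0 :=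
  pathSum_succ_of_iff P fun w => by
    rw [Fin.forall_fin_succ]
    simp only [← Fin.succ_last, Fin.cons_succ, Fin.cons_zero, ne_eq, (Fin.succ_ne_zero _).symm,
      not_false_eq_true, forall_const, Fin.succ_inj]
    tauto

theorem firstHitBeforeProb_zero (a b x : V) :
    firstHitBeforeProb P a b 0 x = if x = a ∧ x ≠ b then 1 else 0 := by
  simp [firstHitBeforeProb, pathSum_zero]

theorem firstHitBeforeProb_succ (a b : V) (t : ℕ) (x : V) :
    firstHitBeforeProb P a b (t+1) x =
      if x ≠ b ∧ x ≠ a then ∑ z, P x z * firstHitBeforeProb P a b t z else 0 :=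
  pathSum_succ_of_iff P fun w => by
    rw [Fin.forall_fin_succ]
    simp only [← Fin.succ_last, Fin.cons_succ, Fin.cons_zero, ne_eq, (Fin.succ_ne_zero _).symm,
      not_false_eq_true, forall_const, Fin.succ_inj]
    tauto

theorem tabooProb_taboo_left (b : V) (t : ℕ) (y : V) : tabooProb P b t b y = 0 := by
  cases t <;> simp [tabooProb_zero, tabooProb_succ]

theorem tabooProb_add (b : V) (m u : ℕ) (x y : V) :
    tabooProb P b (m + u) x y = ∑ z, tabooProb P b m x z * tabooProb P b u z y := by
  induction m generalizing x with
  | zero =>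
    by_cases hx : x = b
    · simp [hx, tabooProb_taboo_left]
    · simp [hx, tabooProb_zero]
  | succ m ih =>
    rw [show m + 1 + u = m + u + 1 by ring, tabooProb_succ]
    simp only [tabooProb_succ, ih, ite_mul, zero_mul, sum_ite_irrel, sum_const_zero, mul_sum,
      sum_mul, mul_assoc]
    rw [sum_comm]

theorem tabooProb_eq_sum_firstHitBeforeProb (a b : V) (t : ℕ) (x : V) :
    tabooProb P b t x a =
      ∑ r ∈ range (t+1), firstHitBeforeProb P a b r x * tabooProb P b (t - r) a a := by
  induction t generalizing x with
  | zero => by_cases hx : x = a <;> simp [hx, tabooProb_zero, firstHitBeforeProb_zero]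
  | succ t ih =>
    rw [sum_range_succ']
    simp only [firstHitBeforeProb_succ, firstHitBeforeProb_zero, Nat.add_sub_add_right,
      Nat.sub_zero]
    by_cases hxa : x = a
    · subst hxa
      by_cases hxb : x = b <;> simp [hxb, tabooProb_taboo_left]
    by_cases hxb : x = b
    · simp [hxb, tabooProb_taboo_left]
    simp only [tabooProb_succ, ne_eq, hxb, not_false_eq_true, ↓reduceIte, ih, mul_sum, hxa,
      and_self, sum_mul, mul_assoc, and_true, ite_not, mul_ite, mul_zero, zero_mul, sum_const_zero,
      ite_self, add_zero]
    rw [sum_comm]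

theorem sum_firstHitBeforeProb_le_one (hnn : ∀ x y, 0 ≤ P x y) (hrow : ∀ x, ∑ y, P x y = 1)
    (a b : V) (n : ℕ) (x : V) : ∑ r ∈ range n, firstHitBeforeProb P a b r x ≤ 1 := by
  induction n generalizing x with
  | zero => simp
  | succ n ih =>
    rw [sum_range_succ']
    by_cases hxa : x = a
    · subst hxa
      simp only [firstHitBeforeProb_succ, firstHitBeforeProb_zero]
      split_ifs <;> simp_all
    by_cases hxb : x = b
    · simp [hxb, firstHitBeforeProb_succ, firstHitBeforeProb_zero]
    calc _ = ∑ z, P x z * ∑ r ∈ range n, firstHitBeforeProb P a b r z := by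
          simp only [firstHitBeforeProb_succ, ne_eq, hxb, not_false_eq_true, hxa, and_self,
            ↓reduceIte, firstHitBeforeProb_zero, and_true, add_zero, mul_sum]
          exact sum_comm
      _ ≤ ∑ z, P x z * 1 := by gcongr with z; exacts [hnn x z, ih z]
      _ = 1 := by simp [hrow]

theorem sum_range_tabooProb_le (hnn : ∀ x y, 0 ≤ P x y) (hrow : ∀ x, ∑ y, P x y = 1)
    (a b : V) (n : ℕ) (y : V) :
    ∑ t ∈ range n, tabooProb P b t y a ≤ ∑ t ∈ range n, tabooProb P b t a a := by
  have hT := fun k => tabooProb_nonneg P hnn b k a a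
  calc ∑ t ∈ range n, tabooProb P b t y a
      = ∑ r ∈ range n, ∑ k ∈ range (n - r),
          firstHitBeforeProb P a b r y * tabooProb P b k a a := by
        rw [sum_congr rfl fun t _ => tabooProb_eq_sum_firstHitBeforeProb P a b t y]
        exact sum_range_diag_flip n fun r k => firstHitBeforeProb P a b r y * tabooProb P b k a a
    _ ≤ ∑ r ∈ range n, firstHitBeforeProb P a b r y * ∑ k ∈ range n, tabooProb P b k a a := by
        gcongr with r
        rw [mul_sum]
        exact sum_le_sum_of_subset_of_nonneg (by simp)
          fun k _ _ => mul_nonneg (firstHitBeforeProb_nonneg P hnn a b r y) (hT k)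
    _ ≤ ∑ t ∈ range n, tabooProb P b t a a := by
        rw [← sum_mul]
        exact mul_le_of_le_one_left (sum_nonneg fun k _ => hT k)
          (sum_firstHitBeforeProb_le_one P hnn hrow a b n y)

theorem sum_Ico_tabooProb_le (hnn : ∀ x y, 0 ≤ P x y) (hrow : ∀ x, ∑ y, P x y = 1) (a b : V)
    (hS : Summable fun t => tabooProb P b t a a) (m N : ℕ) :
    ∑ t ∈ Ico m N, tabooProb P b t a a ≤
      (∑ y, tabooProb P b m a y) * ∑' t, tabooProb P b t a a := by
  rw [sum_Ico_eq_sum_range]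
  simp only [tabooProb_add, sum_mul]
  rw [sum_comm]
  refine sum_le_sum fun y _ => ?_
  rw [← mul_sum]
  exact mul_le_mul_of_nonneg_left ((sum_range_tabooProb_le P hnn hrow a b _ y).trans
    (hS.sum_le_tsum _ fun k _ => tabooProb_nonneg P hnn b k a a)) (tabooProb_nonneg P hnn b m a y)

theorem sum_tabooProb_add_sum_firstHitProb (hrow : ∀ x, ∑ y, P x y = 1) (b : V) (m : ℕ) (x : V) :
    ∑ y, tabooProb P b m x y + ∑ s ∈ range (m+1), firstHitProb P b s x = 1 := by
  induction m generalizing x with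
  | zero => by_cases hx : x = b <;> simp [hx, tabooProb_zero, firstHitProb_zero]
  | succ m ih =>
    rw [sum_range_succ']
    by_cases hx : x = b
    · simp [hx, tabooProb_succ, firstHitProb_succ, firstHitProb_zero]
    simp only [hx, tabooProb_succ, firstHitProb_succ, firstHitProb_zero, ne_eq, not_false_eq_true,
      if_true, if_false, add_zero]
    rw [sum_comm, sum_comm (s := range (m+1)), ← sum_add_distrib]
    simp only [← mul_sum, ← mul_add, ih, mul_one, hrow]

end Taboo

section Renewal

theorem sum_range_one_sub_pow_mul (f : ℕ → ℝ) (q : ℝ) (N : ℕ) :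
    ∑ t ∈ range N, (1 - q ^ t) * f t = ∑ m ∈ range N, (1 - q) * q ^ m * ∑ t ∈ Ico (m+1) N, f t := by
  simp only [← mul_neg_geom_sum, mul_sum, sum_mul, range_eq_Ico]
  rw [sum_Ico_Ico_comm']

variable {f g s : ℕ → ℝ} {q : ℝ}

theorem sum_range_geom_mul_le (hs : ∀ m, s m + ∑ i ∈ range (m+1), g i = 1) (hs0 : ∀ m, 0 ≤ s m)
    (hq : 0 ≤ q) (N : ℕ) :
    ∑ m ∈ range N, (1 - q) * q ^ m * s m ≤ 1 - ∑ i ∈ range (N+1), q ^ i * g i := by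
  -- Abel summation: the increments of `key` vanish because `s m - s (m+1) = g (m+1)`.
  have key : ∀ N, ∑ m ∈ range N, (1 - q) * q ^ m * s m + ∑ i ∈ range (N+1), q ^ i * g i
      + q ^ N * s N = 1 := by
    intro N
    induction N with
    | zero => simpa [add_comm] using hs 0
    | succ N ih =>
      have h := hs (N+1)
      rw [sum_range_succ] at h ⊢
      rw [sum_range_succ]
      linear_combination ih + q ^ (N+1) * (h - hs N)
  linarith [key N, mul_nonneg (pow_nonneg hq N) (hs0 N)]

theorem tsum_pow_succ_mul_mul_tsum_le (hf0 : ∀ t, 0 ≤ f t) (hf : Summable f) (hg0 : ∀ i, 0 ≤ g i)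
    (hs0 : ∀ m, 0 ≤ s m) (hs : ∀ m, s m + ∑ i ∈ range (m+1), g i = 1)
    (htail : ∀ m N, ∑ t ∈ Ico (m+1) N, f t ≤ s m * ∑' t, f t) (hq0 : 0 ≤ q) (hq1 : q ≤ 1) :
    (∑' i, q ^ (i+1) * g i) * ∑' t, f t ≤ ∑' t, q ^ t * f t := by
  set S := ∑' t, f t
  have hS0 : 0 ≤ S := tsum_nonneg hf0
  have hpow_le (i : ℕ) : q ^ i ≤ 1 := pow_le_one₀ hq0 hq1
  have hg : Summable fun i => q ^ (i+1) * g i := by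
    refine summable_of_sum_range_le (c := 1) (fun i => mul_nonneg (pow_nonneg hq0 _) (hg0 i))
      fun n => ?_
    calc ∑ i ∈ range n, q ^ (i+1) * g i ≤ ∑ i ∈ range (n+1), g i := by
          refine (sum_le_sum fun i _ => mul_le_of_le_one_left (hg0 i) (hpow_le _)).trans ?_
          exact sum_le_sum_of_subset_of_nonneg (by simp) fun i _ _ => hg0 i
      _ ≤ 1 := by linarith [hs n, hs0 n]
  have hqf : Summable fun t => q ^ t * f t :=
    hf.of_nonneg_of_le (fun t => mul_nonneg (pow_nonneg hq0 t) (hf0 t))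
      fun t => mul_le_of_le_one_left (hf0 t) (hpow_le t)
  have hpartial (N : ℕ) : ∑ t ∈ range N, (f t - q ^ t * f t) ≤
      (1 - ∑ i ∈ range (N+1), q ^ (i+1) * g i) * S :=
    calc ∑ t ∈ range N, (f t - q ^ t * f t)
        = ∑ m ∈ range N, (1 - q) * q ^ m * ∑ t ∈ Ico (m+1) N, f t := by
          simp only [← one_sub_mul, sum_range_one_sub_pow_mul]
      _ ≤ ∑ m ∈ range N, (1 - q) * q ^ m * (s m * S) := by
          gcongr with m
          exact htail m N
      _ = (∑ m ∈ range N, (1 - q) * q ^ m * s m) * S := by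
          rw [sum_mul]; simp only [mul_assoc]
      _ ≤ (1 - ∑ i ∈ range (N+1), q ^ i * g i) * S := by
          gcongr; exact sum_range_geom_mul_le hs hs0 hq0 N
      _ ≤ (1 - ∑ i ∈ range (N+1), q ^ (i+1) * g i) * S := by
          refine mul_le_mul_of_nonneg_right (sub_le_sub_left (sum_le_sum fun i _ => ?_) 1) hS0
          exact mul_le_mul_of_nonneg_right (pow_le_pow_of_le_one hq0 hq1 i.le_succ) (hg0 i)
  have hlim : S - ∑' t, q ^ t * f t ≤ (1 - ∑' i, q ^ (i+1) * g i) * S :=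
    le_of_tendsto_of_tendsto' (hf.hasSum.sub hqf.hasSum).tendsto_sum_nat
      (((hg.hasSum.tendsto_sum_nat.comp (Filter.tendsto_add_atTop_nat 1)).const_sub 1).mul_const S)
      hpartial
  linarith

end Renewal

theorem visitsBefore_le_two_visitsBeforeGeom_general {V : Type*} [Fintype V]
    (P : V → V → ℝ)
    (hnn : ∀ x y, 0 ≤ P x y) (hrow : ∀ x, ∑ y, P x y = 1)
    (a b : V)
    (lam : ℝ) (hlam0 : 0 < lam) (hlam1 : lam < 1)
    (hhalf : 1 / 2 ≤ hitBeforeGeomProb P a b lam) :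
    visitsBeforeExp P a b ≤ 2 * visitsBeforeGeomExp P a b lam := by
  classical
  have hT := tabooProb_nonneg P hnn b
  have hG0 : 0 ≤ visitsBeforeGeomExp P a b lam :=
    tsum_nonneg fun t => mul_nonneg (pow_nonneg (by linarith) t) (hT t a a)
  by_cases hS : Summable fun t => tabooProb P b t a a
  swap
  · rw [show visitsBeforeExp P a b = 0 from tsum_eq_zero_of_not_summable hS]
    linarith
  have htail (m N : ℕ) : ∑ t ∈ Ico (m+1) N, tabooProb P b t a a ≤
      (∑ y, tabooProb P b m a y) * ∑' t, tabooProb P b t a a :=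
    (sum_le_sum_of_subset_of_nonneg (Ico_subset_Ico_left m.le_succ) fun t _ _ => hT t a a).trans
      (sum_Ico_tabooProb_le P hnn hrow a b hS m N)
  have key : hitBeforeGeomProb P a b lam * visitsBeforeExp P a b ≤ visitsBeforeGeomExp P a b lam :=
    tsum_pow_succ_mul_mul_tsum_le (hT · a a) hS (firstHitProb_nonneg P hnn b · a)
      (fun m => sum_nonneg fun y _ => hT m a y) (sum_tabooProb_add_sum_firstHitProb P hrow b · a)
      htail (by linarith) (by linarith)
  have hS0 : 0 ≤ visitsBeforeExp P a b := tsum_nonneg (hT · a a)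
  nlinarith

/-- If `a ≠ b` and `P_a(τ_b < Γ_λ) ≥ 1/2`, then
`E_a[N(a, τ_b)] ≤ 2·E_a[N(a, Γ_λ ∧ τ_b)]`. -/
theorem visitsBefore_le_two_visitsBeforeGeom {V : Type*} [Fintype V] [DecidableEq V]
    (P : V → V → ℝ)
    (hnn : ∀ x y, 0 ≤ P x y) (hrow : ∀ x, ∑ y, P x y = 1)
    (hirr : ∀ x y, ∃ n : ℕ, 0 < (Matrix.of P ^ n) x y)
    (a b : V) (hab : a ≠ b)
    (lam : ℝ) (hlam0 : 0 < lam) (hlam1 : lam < 1)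
    (hhalf : 1 / 2 ≤ hitBeforeGeomProb P a b lam) :
    visitsBeforeExp P a b ≤ 2 * visitsBeforeGeomExp P a b lam :=
  visitsBefore_le_two_visitsBeforeGeom_general P hnn hrow a b lam hlam0 hlam1 hhalf
end

section
/- Suppose there exist constants C > 0 and c ∈ (0,1) such that for all k ≤ t_cov, P_{π⊗k}(τ_cov(k) ≤ ⌈C·t_cov/k⌉) ≥ c, where τ_cov(k) is the cover time by k independent π-started copies of the chain. Then for every 1 ≤ ℓ ≤ k, P_{π⊗k}(τ_cov(k) ≥ ℓ·⌈C·t_cov/k⌉) ≤ (1−c)^{⌊ℓ/2⌋}. -/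
/-!
Split the `k` walkers into `g = ⌊ℓ/2⌋` disjoint groups of `m = ⌊k/g⌋` walkers, discarding the
rest. The walkers are independent, and when all of them together miss a vertex so does every
group, so `P(τ_cov(k) > t) ≤ P(τ_cov(m) > t)^g`. Since `k ≤ (ℓ - 1) m`, the hypothesis for `m`
walkers concerns the time `⌈C t_cov / m⌉ ≤ (ℓ - 1)⌈C t_cov / k⌉ ≤ ℓ⌈C t_cov / k⌉ - 1`, and the
non-cover probability decreases in time.
-/

open scoped BigOperators

/-- `P_x(τ_cov > t)`: the chain started at `x` has not visited every state by time `t`. -/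
noncomputable def coverTail {V : Type*} [Fintype V] (P : V → V → ℝ) (x : V) (t : ℕ) : ℝ :=
  pathSum P x t (fun w => ¬ ∀ v : V, ∃ i, w i = v)

/-- `E_x[τ_cov]`, the expected cover time started from `x`. -/
noncomputable def expCov {V : Type*} [Fintype V] (P : V → V → ℝ) (x : V) : ℝ :=
  ∑' t : ℕ, coverTail P x t

/-- `t_cov = max_x E_x[τ_cov]`. -/
noncomputable def tcov {V : Type*} [Fintype V] [Nonempty V] (P : V → V → ℝ) : ℝ :=
  ⨆ x : V, expCov P x

/-- `P_{π⊗k}(τ_cov(k) > t)`: the probability that `k` independent copies of the chain,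
each started from an independent `π`-distributed state, have not jointly visited every
state of `V` by time `t`. -/
noncomputable def multiCoverTail {V : Type*} [Fintype V] (P : V → V → ℝ) (π : V → ℝ)
    (k t : ℕ) : ℝ :=
  ∑ x0 : Fin k → V, (∏ i, π (x0 i)) *
    pathSum (fun a b : Fin k → V => ∏ i, P (a i) (b i)) x0 t
      (fun w => ¬ ∀ v : V, ∃ (i : Fin k) (t' : Fin (t+1)), w t' i = v)

section PathSum

variable {W : Type*} [Fintype W] {Q : W → W → ℝ}

theorem sum_init_mul_prod_of_sum_eq_one (hQ : ∀ a, ∑ b, Q a b = 1) (t : ℕ)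
    (f : (Fin (t+1) → W) → ℝ) :
    ∑ w : Fin (t+2) → W, f (Fin.init w) * ∏ s : Fin (t+1), Q (w s.castSucc) (w s.succ) =
      ∑ u : Fin (t+1) → W, f u * ∏ s : Fin t, Q (u s.castSucc) (u s.succ) := by
  rw [← (Fin.snocEquiv fun _ => W).sum_comp, Fintype.sum_prod_type, Finset.sum_comm]
  refine Finset.sum_congr rfl fun u _ => ?_
  have hsnoc : ∀ y, Fin.snocEquiv (fun _ => W) (y, u) = Fin.snoc u y := fun _ => rfl
  simp only [hsnoc, Fin.init_snoc, Fin.prod_univ_castSucc, Fin.snoc_castSucc,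
    ← Fin.castSucc_succ, Fin.succ_last, Fin.snoc_last, ← Finset.mul_sum, hQ, mul_one]

theorem pathSum_succ_le (hQ0 : ∀ a b, 0 ≤ Q a b) (hQ1 : ∀ a, ∑ b, Q a b = 1) (x : W) (t : ℕ)
    {A : (Fin (t+2) → W) → Prop} {B : (Fin (t+1) → W) → Prop}
    (hAB : ∀ w, A w → B (Fin.init w)) :
    pathSum Q x (t+1) A ≤ pathSum Q x t B := by
  classical
  calc pathSum Q x (t+1) A
      ≤ ∑ w : Fin (t+2) → W, (if Fin.init w 0 = x ∧ B (Fin.init w) then 1 else 0) *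
          ∏ s : Fin (t+1), Q (w s.castSucc) (w s.succ) := by
        refine Finset.sum_le_sum fun w _ => ?_
        have hprod : 0 ≤ ∏ s : Fin (t+1), Q (w s.castSucc) (w s.succ) :=
          Finset.prod_nonneg fun _ _ => hQ0 _ _
        by_cases hw : w 0 = x ∧ A w
        · rw [if_pos hw, if_pos ⟨hw.1, hAB w hw.2⟩, one_mul]
        · rw [if_neg hw]; split_ifs <;> simp [hprod]
    _ = pathSum Q x t B := by
        rw [sum_init_mul_prod_of_sum_eq_one hQ1 t (fun u => if u 0 = x ∧ B u then 1 else 0)]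
        simp only [pathSum, ite_mul, one_mul, zero_mul]

end PathSum

section WalkWeight

variable {V : Type*} {P : V → V → ℝ} {π : V → ℝ}

noncomputable def walkWeight (P : V → V → ℝ) (π : V → ℝ) (t : ℕ) (u : Fin (t+1) → V) : ℝ :=
  π (u 0) * ∏ s : Fin t, P (u s.castSucc) (u s.succ)

theorem walkWeight_nonneg (hP : ∀ x y, 0 ≤ P x y) (hπ : ∀ x, 0 ≤ π x) {t : ℕ}
    (u : Fin (t+1) → V) : 0 ≤ walkWeight P π t u :=
  mul_nonneg (hπ _) (Finset.prod_nonneg fun _ _ => hP _ _)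

theorem sum_walkWeight [Fintype V] (hP : ∀ x, ∑ y, P x y = 1) (hπ : ∑ x, π x = 1) (t : ℕ) :
    ∑ u, walkWeight P π t u = 1 := by
  induction t with
  | zero =>
    simpa [walkWeight, ← (Equiv.funUnique (Fin 1) V).symm.sum_comp] using hπ
  | succ t ih => rw [← ih]; exact sum_init_mul_prod_of_sum_eq_one hP t fun u => π (u 0)

end WalkWeight

section FamilyTail

variable {V : Type*} [Fintype V] {t : ℕ}

open Classical in
/-- `P(τ_cov > t)` for independent walkers indexed by `ι`, each with path law `w` up to time `t`. -/
noncomputable def familyTail (w : (Fin (t+1) → V) → ℝ) (ι : Type*) [Fintype ι] [DecidableEq ι] :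
    ℝ :=
  ∑ ω : ι → Fin (t+1) → V, if ∀ v, ∃ i s, ω i s = v then 0 else ∏ i, w (ω i)

variable {w : (Fin (t+1) → V) → ℝ} {ι κ : Type*} [Fintype ι] [DecidableEq ι] [Fintype κ]
  [DecidableEq κ]

theorem familyTail_nonneg (hw : ∀ u, 0 ≤ w u) : 0 ≤ familyTail w ι :=
  Finset.sum_nonneg fun _ _ => by
    split_ifs
    exacts [le_rfl, Finset.prod_nonneg fun _ _ => hw _]

theorem familyTail_le_one (hw : ∀ u, 0 ≤ w u) (hw1 : ∑ u, w u = 1) : familyTail w ι ≤ 1 :=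
  calc familyTail w ι ≤ ∑ ω : ι → Fin (t+1) → V, ∏ i, w (ω i) :=
        Finset.sum_le_sum fun _ _ => by
          split_ifs
          exacts [Finset.prod_nonneg fun _ _ => hw _, le_rfl]
    _ = 1 := by rw [← Fintype.prod_sum fun _ => w, hw1, Finset.prod_const_one]

theorem familyTail_congr (e : ι ≃ κ) : familyTail w ι = familyTail w κ := by
  refine Fintype.sum_equiv (M := ℝ) (e.arrowCongr (Equiv.refl _)) _ _ fun ω => ?_
  have hcov : (∀ v, ∃ j s, ω (e.symm j) s = v) ↔ ∀ v, ∃ i s, ω i s = v :=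
    forall_congr' fun v => (e.symm.surjective.exists (p := fun i => ∃ s, ω i s = v)).symm
  have he : e.arrowCongr (Equiv.refl _) ω = ω ∘ e.symm := rfl
  rw [he]
  simp only [Function.comp_apply, Equiv.prod_comp e.symm fun i => w (ω i)]
  classical exact if_congr hcov.symm rfl rfl

theorem familyTail_sum_le (hw : ∀ u, 0 ≤ w u) :
    familyTail w (ι ⊕ κ) ≤ familyTail w ι * familyTail w κ := by
  rw [familyTail, ← (Equiv.sumArrowEquivProdArrow ι κ _).symm.sum_comp, Fintype.sum_prod_type,
    familyTail, familyTail, Finset.sum_mul_sum]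
  refine Finset.sum_le_sum fun a _ => Finset.sum_le_sum fun b _ => ?_
  have he : (Equiv.sumArrowEquivProdArrow ι κ _).symm (a, b) = Sum.elim a b := rfl
  rw [he]
  by_cases ha : ∀ v, ∃ i s, a i s = v
  · have hab : ∀ v, ∃ i s, Sum.elim a b i s = v := fun v =>
      let ⟨i, s, h⟩ := ha v; ⟨Sum.inl i, s, h⟩
    rw [if_pos ha, if_pos hab, zero_mul]
  by_cases hb : ∀ v, ∃ i s, b i s = v
  · have hab : ∀ v, ∃ i s, Sum.elim a b i s = v := fun v =>
      let ⟨i, s, h⟩ := hb v; ⟨Sum.inr i, s, h⟩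
    rw [if_pos hb, if_pos hab, mul_zero]
  rw [if_neg ha, if_neg hb, Fintype.prod_sum_type]
  simp only [Sum.elim_inl, Sum.elim_inr]
  split_ifs
  exacts [mul_nonneg (Finset.prod_nonneg fun _ _ => hw _) (Finset.prod_nonneg fun _ _ => hw _),
    le_rfl]

theorem familyTail_fin_le_pow (hw : ∀ u, 0 ≤ w u) (hw1 : ∑ u, w u = 1) {g m k : ℕ}
    (hgm : g * m ≤ k) : familyTail w (Fin k) ≤ familyTail w (Fin m) ^ g := by
  induction g generalizing k with
  | zero => simpa using familyTail_le_one hw hw1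
  | succ g ih =>
    rw [Nat.succ_mul] at hgm
    have hk : m + (k - m) = k := by omega
    calc familyTail w (Fin k) = familyTail w (Fin m ⊕ Fin (k - m)) :=
          familyTail_congr ((finCongr hk).symm.trans finSumFinEquiv.symm)
      _ ≤ familyTail w (Fin m) * familyTail w (Fin (k - m)) := familyTail_sum_le hw
      _ ≤ familyTail w (Fin m) * familyTail w (Fin m) ^ g :=
          mul_le_mul_of_nonneg_left (ih (by omega)) (familyTail_nonneg hw)
      _ = familyTail w (Fin m) ^ (g + 1) := (pow_succ' _ _).symm

end FamilyTail

section MultiCoverTail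

variable {V : Type*} [Fintype V] {P : V → V → ℝ} {π : V → ℝ}

theorem multiCoverTail_eq_familyTail (k t : ℕ) :
    multiCoverTail P π k t = familyTail (walkWeight P π t) (Fin k) := by
  classical
  simp only [multiCoverTail, pathSum, familyTail, walkWeight, Finset.mul_sum]
  rw [Finset.sum_comm]
  refine Fintype.sum_equiv (M := ℝ) (Equiv.piComm fun (_ : Fin (t+1)) (_ : Fin k) => V) _ _
    fun w => ?_
  simp only [Equiv.piComm_apply, mul_ite, mul_zero, ite_and, Finset.sum_ite_eq,
    Finset.mem_univ, if_true]
  split_ifs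
  · rfl
  · rw [Finset.prod_mul_distrib, Finset.prod_comm]

theorem multiCoverTail_succ_le (hP : ∀ x y, 0 ≤ P x y) (hrow : ∀ x, ∑ y, P x y = 1)
    (hπ : ∀ x, 0 ≤ π x) (k t : ℕ) : multiCoverTail P π k (t+1) ≤ multiCoverTail P π k t := by
  have hrowk : ∀ a : Fin k → V, ∑ b : Fin k → V, ∏ i, P (a i) (b i) = 1 := fun a => by
    rw [← Fintype.prod_sum fun i => P (a i), Finset.prod_congr rfl fun i _ => hrow (a i),
      Finset.prod_const_one]
  refine Finset.sum_le_sum fun x₀ _ => mul_le_mul_of_nonneg_left ?_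
    (Finset.prod_nonneg fun _ _ => hπ _)
  refine pathSum_succ_le (fun _ _ => Finset.prod_nonneg fun _ _ => hP _ _) hrowk x₀ t ?_
  intro w hw hinit
  exact hw fun v => let ⟨i, s, hs⟩ := hinit v; ⟨i, s.castSucc, hs⟩

theorem multiCoverTail_antitone (hP : ∀ x y, 0 ≤ P x y) (hrow : ∀ x, ∑ y, P x y = 1)
    (hπ : ∀ x, 0 ≤ π x) (k : ℕ) : Antitone (multiCoverTail P π k) :=
  antitone_nat_of_succ_le (multiCoverTail_succ_le hP hrow hπ k)

theorem multiCoverTail_nonneg (hP : ∀ x y, 0 ≤ P x y) (hπ : ∀ x, 0 ≤ π x) (k t : ℕ) :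
    0 ≤ multiCoverTail P π k t := by
  rw [multiCoverTail_eq_familyTail]
  exact familyTail_nonneg (walkWeight_nonneg hP hπ)

theorem multiCoverTail_le_pow (hP : ∀ x y, 0 ≤ P x y) (hrow : ∀ x, ∑ y, P x y = 1)
    (hπ : ∀ x, 0 ≤ π x) (hπ1 : ∑ x, π x = 1) {g m k : ℕ} (hgm : g * m ≤ k) (t : ℕ) :
    multiCoverTail P π k t ≤ multiCoverTail P π m t ^ g := by
  rw [multiCoverTail_eq_familyTail, multiCoverTail_eq_familyTail]
  exact familyTail_fin_le_pow (walkWeight_nonneg hP hπ) (sum_walkWeight hrow hπ1 t) hgm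

end MultiCoverTail

theorem le_sub_one_mul_div {g k ℓ : ℕ} (hg : 0 < g) (hgk : g ≤ k) (hgℓ : 2 * g ≤ ℓ) :
    k ≤ (ℓ - 1) * (k / g) := by
  have hk : k < k / g * g + g := Nat.lt_div_mul_add hg
  have hm : 0 < k / g := Nat.div_pos hgk hg
  obtain ⟨n, rfl⟩ : ∃ n, ℓ = n + 1 := ⟨ℓ - 1, by omega⟩
  rw [Nat.add_sub_cancel]
  nlinarith

theorem ceil_div_le_mul_ceil_div {x : ℝ} (hx : 0 ≤ x) {k m n : ℕ} (hk : 0 < k)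
    (hkm : k ≤ n * m) : ⌈x / m⌉₊ ≤ n * ⌈x / k⌉₊ := by
  have hm : (0 : ℝ) < m := by exact_mod_cast Nat.pos_of_mul_pos_left (hk.trans_le hkm)
  have hkm' : (k : ℝ) ≤ n * m := by exact_mod_cast hkm
  refine Nat.ceil_le.2 ?_
  push_cast
  calc x / m ≤ n * x / k := by
        rw [div_le_div_iff₀ hm (by positivity)]
        nlinarith [mul_le_mul_of_nonneg_left hkm' hx]
    _ ≤ n * ⌈x / k⌉₊ := by
      rw [mul_div_assoc]
      exact mul_le_mul_of_nonneg_left (Nat.le_ceil _) n.cast_nonneg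

theorem multi_cover_tail_geometric_general {V : Type*} [Fintype V] [Nonempty V]
    (P : V → V → ℝ) (π : V → ℝ)
    (hnn : ∀ x y, 0 ≤ P x y) (hrow : ∀ x, ∑ y, P x y = 1)
    (hπ0 : ∀ x, 0 < π x) (hπ1 : ∑ x, π x = 1)
    (C c : ℝ) (hC : 0 < C)
    (h : ∀ k : ℕ, 0 < k → (k : ℝ) ≤ tcov P →
      c ≤ 1 - multiCoverTail P π k ⌈C * tcov P / k⌉₊) :
    ∀ k : ℕ, 0 < k → (k : ℝ) ≤ tcov P →
      ∀ ℓ : ℕ, 1 ≤ ℓ → ℓ ≤ k →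
        multiCoverTail P π k (ℓ * ⌈C * tcov P / k⌉₊ - 1) ≤ (1 - c) ^ (ℓ / 2) := by
  intro k hk hkt ℓ hℓ hℓk
  have hπ : ∀ x, 0 ≤ π x := fun x => (hπ0 x).le
  have htcov : 0 < tcov P := lt_of_lt_of_le (by exact_mod_cast hk) hkt
  set T := ⌈C * tcov P / k⌉₊
  have hT : 1 ≤ T := Nat.one_le_ceil_iff.2 (by positivity)
  set g := ℓ / 2
  set m := k / g
  calc multiCoverTail P π k (ℓ * T - 1) ≤ multiCoverTail P π m (ℓ * T - 1) ^ g :=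
        multiCoverTail_le_pow hnn hrow hπ hπ1 (by rw [mul_comm]; exact Nat.div_mul_le_self k g) _
    _ ≤ (1 - c) ^ g := by
      rcases Nat.eq_zero_or_pos g with hg | hg
      · rw [hg, pow_zero, pow_zero]
      have hm : 0 < m := Nat.div_pos (by omega) hg
      have hkm : k ≤ (ℓ - 1) * m := le_sub_one_mul_div hg (by omega) (by omega)
      have htime : ⌈C * tcov P / m⌉₊ ≤ ℓ * T - 1 :=
        calc ⌈C * tcov P / m⌉₊ ≤ (ℓ - 1) * T := ceil_div_le_mul_ceil_div (by positivity) hk hkm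
          _ ≤ ℓ * T - 1 := by rw [Nat.sub_one_mul]; omega
      have hcover_m := h m hm ((Nat.cast_le.2 (Nat.div_le_self k g)).trans hkt)
      refine pow_le_pow_left₀ (multiCoverTail_nonneg hnn hπ m _) ?_ g
      linarith [multiCoverTail_antitone hnn hrow hπ m htime]

/-- If for some `C > 0` and `c ∈ (0,1)` one has
`P_{π⊗k}(τ_cov(k) ≤ ⌈C·t_cov/k⌉) ≥ c` for all `k ≤ t_cov`, then for every `1 ≤ ℓ ≤ k`,
`P_{π⊗k}(τ_cov(k) ≥ ℓ·⌈C·t_cov/k⌉) ≤ (1−c)^{⌊ℓ/2⌋}`. -/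
theorem multi_cover_tail_geometric {V : Type*} [Fintype V] [DecidableEq V] [Nonempty V]
    (P : V → V → ℝ) (π : V → ℝ)
    (hnn : ∀ x y, 0 ≤ P x y) (hrow : ∀ x, ∑ y, P x y = 1)
    (hirr : ∀ x y, ∃ n : ℕ, 0 < (Matrix.of P ^ n) x y)
    (hπ0 : ∀ x, 0 < π x) (hπ1 : ∑ x, π x = 1)
    (hrev : ∀ x y, π x * P x y = π y * P y x)
    (C c : ℝ) (hC : 0 < C) (hc0 : 0 < c) (hc1 : c < 1)
    (h : ∀ k : ℕ, 0 < k → (k : ℝ) ≤ tcov P →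
      c ≤ 1 - multiCoverTail P π k ⌈C * tcov P / k⌉₊) :
    ∀ k : ℕ, 0 < k → (k : ℝ) ≤ tcov P →
      ∀ ℓ : ℕ, 1 ≤ ℓ → ℓ ≤ k →
        multiCoverTail P π k (ℓ * ⌈C * tcov P / k⌉₊ - 1) ≤ (1 - c) ^ (ℓ / 2) :=
  multi_cover_tail_geometric_general P π hnn hrow hπ0 hπ1 C c hC h
end
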